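/- Let n ≥ 2 be an integer, let C ⊆ 𝔽₂ⁿ be a binary linear code containing a nonzero codeword, let d_min be the minimum Hamming weight of the nonzero codewords of C, and let A = #{c ∈ C : wt(c) = d_min}. For c ∈ C let s(c) ∈ ℝⁿ denote its BPSK image with coordinates s(c)_t = 1 − 2 c_t, and let s₀ = s(0) be the all-ones vector. For r > 0 let μ_r denote the uniform (normalized rotation-invariant) probability measure on the sphere {y ∈ ℝⁿ : ‖y − s₀‖ = r}, and define p₂(r, d) = (Γ(n/2) / (√π · Γ((n−1)/2))) · ∫_0^{arccos(√d / r)} sin^{n−2}(φ) dφ for r > √d and p₂(r, d) = 0 for r ≤ √d. Then there exists δ₁ > √(d_min) such that for all r ∈ (√(d_min), δ₁], μ_r({y : ∃ c ∈ C, c ≠ 0, ‖y − s(c)‖ ≤ ‖y − s₀‖}) = A · p₂(r, d_min). -/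

import Mathlib

/-!
On the sphere `‖y - s₀‖ = r`, a codeword `c` is at least as close to `y` as `s₀` iff `y` lies in
the half-space `⟪y - s₀, u_c⟫ ≥ √wt(c)`, `u_c` the unit vector towards `s(c)`. By the triangle
inequality this forces `wt(c) ≤ r²`, so for `r² ≤ d_min + 1/4` only minimum-weight codewords
contribute, and by the parallelogram law their caps are pairwise disjoint.

Two rotation-invariant probability measures on a sphere agree on half-spaces (count the pairs
`(y, z)` with `z` in the cap centred at `y` in both orders), so each cap has the measure it has
under the radial projection of the normalized volume of the unit ball. That one is a cone volume,
computed by writing `ℝⁿ = ℝ × ℝⁿ⁻¹`, integrating radially in `ℝⁿ⁻¹` and passing to polar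
coordinates in the remaining plane; this yields `p₂(r, d_min)`.
-/

open MeasureTheory Real

/-- The BPSK (bipolar) image of a binary vector: `s t = 1 - 2 c_t`, viewed as a
point of Euclidean space `ℝⁿ`. -/
noncomputable def bpsk {n : ℕ} (c : Fin n → ZMod 2) : EuclideanSpace ℝ (Fin n) :=
  (WithLp.equiv 2 (Fin n → ℝ)).symm (fun t => 1 - 2 * ((c t).val : ℝ))

open Set Metric
open scoped RealInnerProductSpace ENNReal

section Geometry

variable {E : Type*} [NormedAddCommGroup E] [InnerProductSpace ℝ E]

def halfSpace (q u : E) (a : ℝ) : Set E := {y | a ≤ ⟪y - q, u⟫}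

def rotateAbout (q : E) (O : E ≃ₗᵢ[ℝ] E) (y : E) : E := q + O (y - q)

lemma preimage_rotateAbout_halfSpace (q u : E) (a : ℝ) (O : E ≃ₗᵢ[ℝ] E) :
    rotateAbout q O ⁻¹' halfSpace q u a = halfSpace q (O.symm u) a := by
  ext y
  change a ≤ ⟪q + O (y - q) - q, u⟫ ↔ a ≤ ⟪y - q, O.symm u⟫
  rw [add_sub_cancel_left, ← O.inner_map_map (y - q), O.apply_symm_apply]

lemma norm_sub_le_norm_sub_iff_inner {p q y : E} :
    ‖y - p‖ ≤ ‖y - q‖ ↔ ‖p - q‖ ^ 2 ≤ 2 * ⟪y - q, p - q⟫ := by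
  rw [show y - p = (y - q) - (p - q) by abel, ← sq_le_sq₀ (norm_nonneg _) (norm_nonneg _),
    norm_sub_sq_real]
  constructor <;> intro h <;> linarith

lemma setOf_norm_sub_le_norm_sub_eq_halfSpace {p q : E} (hpq : p ≠ q) :
    {y | ‖y - p‖ ≤ ‖y - q‖} = halfSpace q (‖p - q‖⁻¹ • (p - q)) (‖p - q‖ / 2) := by
  have hpos : 0 < ‖p - q‖ := norm_pos_iff.mpr (sub_ne_zero.mpr hpq)
  ext y
  change ‖y - p‖ ≤ ‖y - q‖ ↔ _ ≤ ⟪y - q, ‖p - q‖⁻¹ • (p - q)⟫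
  rw [norm_sub_le_norm_sub_iff_inner, real_inner_smul_right, inv_mul_eq_div, le_div_iff₀ hpos]
  constructor <;> intro h <;> linarith

lemma sq_norm_add_sq_norm_le_of_norm_sub_le {p p' q y : E} (h : ‖y - p‖ ≤ ‖y - q‖)
    (h' : ‖y - p'‖ ≤ ‖y - q‖) :
    ‖p - q‖ ^ 2 + ‖p' - q‖ ^ 2 ≤ 2 * (‖y - q‖ * ‖(p - q) + (p' - q)‖) := by
  rw [norm_sub_le_norm_sub_iff_inner] at h h'
  have := real_inner_le_norm (y - q) ((p - q) + (p' - q))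
  rw [inner_add_right] at this
  linarith

lemma exists_linearIsometryEquiv_apply_eq {u u' : E} (h : ‖u‖ = ‖u'‖) :
    ∃ O : E ≃ₗᵢ[ℝ] E, O u = u' :=
  ⟨(ℝ ∙ (u - u'))ᗮ.reflection, Submodule.reflection_sub h⟩

end Geometry

section RotationInvariance

variable {E : Type*} [NormedAddCommGroup E] [InnerProductSpace ℝ E] [MeasurableSpace E]
  [BorelSpace E]

lemma measurableSet_halfSpace (q u : E) (a : ℝ) : MeasurableSet (halfSpace q u a) :=
  measurableSet_le measurable_const
    ((continuous_id.sub continuous_const).inner continuous_const).measurable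

lemma measurable_rotateAbout (q : E) (O : E ≃ₗᵢ[ℝ] E) : Measurable (rotateAbout q O) :=
  (continuous_const.add (O.continuous.comp (continuous_id.sub continuous_const))).measurable

lemma measure_halfSpace_eq_of_norm_eq {ν : Measure E} {q u u' : E} (a : ℝ)
    (hν : ∀ O : E ≃ₗᵢ[ℝ] E, ν.map (rotateAbout q O) = ν) (h : ‖u‖ = ‖u'‖) :
    ν (halfSpace q u a) = ν (halfSpace q u' a) := by
  obtain ⟨O, rfl⟩ := exists_linearIsometryEquiv_apply_eq h.symm
  conv_lhs => rw [← hν O]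
  rw [Measure.map_apply (measurable_rotateAbout q O) (measurableSet_halfSpace _ _ _),
    preimage_rotateAbout_halfSpace, O.symm_apply_apply]

lemma measure_halfSpace_eq_of_map_rotateAbout_eq [SecondCountableTopology E]
    {ν₁ ν₂ : Measure E} [IsProbabilityMeasure ν₁] [IsProbabilityMeasure ν₂] {q : E} {r : ℝ}
    (hr : 0 < r) (h₁ : ∀ᵐ y ∂ν₁, y ∈ sphere q r) (h₂ : ∀ᵐ y ∂ν₂, y ∈ sphere q r)
    (hν₁ : ∀ O : E ≃ₗᵢ[ℝ] E, ν₁.map (rotateAbout q O) = ν₁)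
    (hν₂ : ∀ O : E ≃ₗᵢ[ℝ] E, ν₂.map (rotateAbout q O) = ν₂) (u : E) (a : ℝ) :
    ν₁ (halfSpace q u a) = ν₂ (halfSpace q u a) := by
  -- Both sides equal `(ν₁.prod ν₂) K`: almost every slice of `K`, in either variable, is a
  -- half-space whose normal has norm `‖u‖`.
  set K : Set (E × E) := {p | a ≤ ⟪p.2 - q, (‖u‖ / r) • (p.1 - q)⟫}
  have hK : MeasurableSet K := measurableSet_le measurable_const
    ((continuous_snd.sub continuous_const).inner
      (continuous_const.smul (continuous_fst.sub continuous_const))).measurable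
  have hnorm : ∀ y ∈ sphere q r, ‖(‖u‖ / r) • (y - q)‖ = ‖u‖ := fun y hy => by
    rw [norm_smul, ← dist_eq_norm, mem_sphere.mp hy, norm_div, norm_norm, Real.norm_of_nonneg hr.le,
      div_mul_cancel₀ _ hr.ne']
  have hslice₁ : ∀ᵐ y ∂ν₁, ν₂ (Prod.mk y ⁻¹' K) = ν₂ (halfSpace q u a) := h₁.mono fun y hy =>
    measure_halfSpace_eq_of_norm_eq a hν₂ (hnorm y hy)
  have hslice₂ : ∀ᵐ z ∂ν₂, ν₁ ((fun y => (y, z)) ⁻¹' K) = ν₁ (halfSpace q u a) := by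
    refine h₂.mono fun z hz => ?_
    have : (fun y => (y, z)) ⁻¹' K = halfSpace q ((‖u‖ / r) • (z - q)) a := by
      ext y
      change a ≤ ⟪z - q, (‖u‖ / r) • (y - q)⟫ ↔ a ≤ ⟪y - q, (‖u‖ / r) • (z - q)⟫
      rw [real_inner_smul_right, real_inner_smul_right, real_inner_comm]
    rw [this, measure_halfSpace_eq_of_norm_eq a hν₁ (hnorm z hz)]
  have h := (Measure.prod_apply hK).symm.trans (Measure.prod_apply_symm (μ := ν₁) (ν := ν₂) hK)
  rwa [lintegral_congr_ae hslice₁, lintegral_congr_ae hslice₂, lintegral_const, lintegral_const,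
    measure_univ, measure_univ, mul_one, mul_one, eq_comm] at h

end RotationInvariance

section UniformSphereMeasure

variable {E : Type*} [NormedAddCommGroup E] [InnerProductSpace ℝ E] [FiniteDimensional ℝ E]
  [MeasurableSpace E] [BorelSpace E]

noncomputable def sphereProj (q : E) (r : ℝ) (x : E) : E := q + (r * ‖x‖⁻¹) • x

/-- The normalized surface measure of `sphere q r` (the cone measure). -/
noncomputable def uniformSphereMeasure (q : E) (r : ℝ) : Measure E :=
  (volume (ball (0 : E) 1))⁻¹ • (volume.restrict (ball 0 1)).map (sphereProj q r)

lemma measurable_sphereProj (q : E) (r : ℝ) : Measurable (sphereProj q r) :=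
  measurable_const.add ((measurable_const.mul measurable_norm.inv).smul measurable_id)

lemma uniformSphereMeasure_apply (q : E) (r : ℝ) {A : Set E} (hA : MeasurableSet A) :
    uniformSphereMeasure q r A =
      (volume (ball (0 : E) 1))⁻¹ * volume (sphereProj q r ⁻¹' A ∩ ball 0 1) := by
  rw [uniformSphereMeasure, Measure.smul_apply, Measure.map_apply (measurable_sphereProj q r) hA,
    Measure.restrict_apply' measurableSet_ball, smul_eq_mul]

lemma map_rotateAbout_uniformSphereMeasure (q : E) (r : ℝ) (O : E ≃ₗᵢ[ℝ] E) :
    (uniformSphereMeasure q r).map (rotateAbout q O) = uniformSphereMeasure q r := by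
  have hcomm : rotateAbout q O ∘ sphereProj q r = sphereProj q r ∘ O := by
    funext x
    simp only [Function.comp_apply, rotateAbout, sphereProj, add_sub_cancel_left, O.map_smul,
      O.norm_map]
  have hball : (volume.restrict (ball (0 : E) 1)).map O = volume.restrict (ball 0 1) := by
    conv_rhs => rw [← O.measurePreserving.map_eq,
      Measure.restrict_map O.continuous.measurable measurableSet_ball]
    congr 2
    ext x
    simp
  rw [uniformSphereMeasure, Measure.map_smul,
    Measure.map_map (measurable_rotateAbout q O) (measurable_sphereProj q r), hcomm,
    ← Measure.map_map (measurable_sphereProj q r) O.continuous.measurable, hball]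

variable [Nontrivial E]

instance (q : E) (r : ℝ) : IsProbabilityMeasure (uniformSphereMeasure q r) := by
  constructor
  rw [uniformSphereMeasure_apply q r MeasurableSet.univ, preimage_univ, univ_inter,
    ENNReal.inv_mul_cancel (measure_ball_pos _ _ one_pos).ne' measure_ball_lt_top.ne]

lemma ae_mem_sphere_uniformSphereMeasure (q : E) {r : ℝ} (hr : 0 ≤ r) :
    ∀ᵐ y ∂uniformSphereMeasure q r, y ∈ sphere q r := by
  refine Measure.ae_smul_measure ?_ _
  rw [ae_map_iff (measurable_sphereProj q r).aemeasurable (p := (· ∈ sphere q r))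
    isClosed_sphere.measurableSet]
  refine ae_restrict_of_ae ((Measure.ae_ne volume 0).mono fun x hx => ?_)
  rw [mem_sphere_iff_norm, sphereProj, add_sub_cancel_left, norm_smul, Real.norm_eq_abs,
    abs_of_nonneg (by positivity), mul_assoc, inv_mul_cancel₀ (norm_ne_zero_iff.mpr hx), mul_one]

lemma uniformSphereMeasure_halfSpace (q u : E) {r : ℝ} (a : ℝ) (hr : 0 < r) :
    uniformSphereMeasure q r (halfSpace q u a) =
      (volume (ball (0 : E) 1))⁻¹ * volume ({x | a / r * ‖x‖ ≤ ⟪x, u⟫} ∩ ball 0 1) := by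
  rw [uniformSphereMeasure_apply q r (measurableSet_halfSpace q u a)]
  congr 1
  refine measure_congr (Filter.eventuallyEq_set.mpr ((Measure.ae_ne volume 0).mono fun x hx => ?_))
  have hx : 0 < ‖x‖ := norm_pos_iff.mpr hx
  change a ≤ ⟪q + (r * ‖x‖⁻¹) • x - q, u⟫ ∧ _ ↔ a / r * ‖x‖ ≤ ⟪x, u⟫ ∧ _
  rw [add_sub_cancel_left, real_inner_smul_left, ← div_eq_mul_inv, div_mul_eq_mul_div,
    le_div_iff₀ hx, div_mul_eq_mul_div, div_le_iff₀ hr, mul_comm r]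

end UniformSphereMeasure

section Cylindrical

variable {F : Type*} [NormedAddCommGroup F] [NormedSpace ℝ F] [FiniteDimensional ℝ F]
  [MeasurableSpace F] [BorelSpace F] [Nontrivial F] (μ : Measure F) [μ.IsAddHaarMeasure]

lemma addHaar_preimage_norm {R : Set ℝ} (hR : MeasurableSet R) :
    μ (norm ⁻¹' R) = Module.finrank ℝ F * μ (ball 0 1) *
      ∫⁻ ρ in R ∩ Ioi 0, ENNReal.ofReal (ρ ^ (Module.finrank ℝ F - 1)) := by
  set T : Set (Ioi (0 : ℝ)) := {ρ | ρ.1 ∈ R}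
  have hT : MeasurableSet T := measurable_subtype_coe hR
  have hpre : homeomorphUnitSphereProd F ⁻¹' (univ ×ˢ T) =
      {x : ({0}ᶜ : Set F) | ‖(x : F)‖ ∈ R} := by
    ext x
    simp [T]
  have himage : Subtype.val '' {x : ({0}ᶜ : Set F) | ‖(x : F)‖ ∈ R} = norm ⁻¹' R \ {0} := by
    ext x
    exact ⟨fun ⟨y, hy, hyx⟩ => hyx ▸ ⟨hy, y.2⟩, fun ⟨hx, hx0⟩ => ⟨⟨x, hx0⟩, hx, rfl⟩⟩
  have hT' : Subtype.val '' T = R ∩ Ioi 0 := by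
    ext ρ
    simp [T, and_comm]
  rw [← measure_sdiff_null (measure_singleton (μ := μ) 0), ← himage,
    ← comap_subtype_coe_apply (measurableSet_singleton 0).compl, ← hpre,
    (μ.measurePreserving_homeomorphUnitSphereProd).measure_preimage
      (MeasurableSet.univ.prod hT).nullMeasurableSet,
    Measure.prod_prod, μ.toSphere_apply_univ, Measure.volumeIoiPow,
    withDensity_apply _ hT,
    setLIntegral_subtype measurableSet_Ioi T fun ρ => ENNReal.ofReal (ρ ^ _), hT']

lemma prod_addHaar_preimage_fst_norm {T : Set (ℝ × ℝ)} (hT : MeasurableSet T) :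
    (volume.prod μ) ((fun p : ℝ × F => (p.1, ‖p.2‖)) ⁻¹' T) = Module.finrank ℝ F * μ (ball 0 1) *
      ∫⁻ q in T ∩ {q | 0 < q.2}, ENNReal.ofReal (q.2 ^ (Module.finrank ℝ F - 1)) := by
  set g : ℝ × ℝ → ℝ≥0∞ :=
    (T ∩ {q | 0 < q.2}).indicator fun q => ENNReal.ofReal (q.2 ^ (Module.finrank ℝ F - 1))
  have hS : MeasurableSet (T ∩ {q | 0 < q.2}) :=
    hT.inter (measurableSet_lt measurable_const measurable_snd)
  have hg : Measurable g := ((measurable_snd.pow_const _).ennreal_ofReal).indicator hS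
  have hslice : ∀ a, μ (Prod.mk a ⁻¹' ((fun p : ℝ × F => (p.1, ‖p.2‖)) ⁻¹' T)) =
      Module.finrank ℝ F * μ (ball 0 1) * ∫⁻ ρ, g (a, ρ) := fun a => by
    rw [show Prod.mk a ⁻¹' ((fun p : ℝ × F => (p.1, ‖p.2‖)) ⁻¹' T) = norm ⁻¹' (Prod.mk a ⁻¹' T)
      from rfl, addHaar_preimage_norm μ (measurable_prodMk_left hT),
      ← lintegral_indicator ((measurable_prodMk_left hT).inter measurableSet_Ioi)]
    rfl
  rw [Measure.prod_apply ((measurable_fst.prodMk measurable_snd.norm) hT), lintegral_congr hslice,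
    lintegral_const_mul _ (hg.lintegral_prod_right' (ν := volume)), ← lintegral_indicator hS,
    Measure.volume_eq_prod, lintegral_prod _ hg.aemeasurable]

end Cylindrical

/-- The profile in the `(x₀, ‖(x₁, …)‖)`-plane of the cone `{x | t ‖x‖ ≤ x₀} ∩ ball 0 1`. -/
def unitSector (t : ℝ) : Set (ℝ × ℝ) :=
  {q | t * √(q.1 ^ 2 + q.2 ^ 2) ≤ q.1 ∧ √(q.1 ^ 2 + q.2 ^ 2) < 1}

lemma measurableSet_unitSector (t : ℝ) : MeasurableSet (unitSector t) := by
  have h : Continuous fun q : ℝ × ℝ => √(q.1 ^ 2 + q.2 ^ 2) := by fun_prop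
  exact (measurableSet_le (continuous_const.mul h).measurable measurable_fst).inter
    (measurableSet_lt h.measurable measurable_const)

lemma le_cos_iff_le_arccos {t φ : ℝ} (ht₁ : -1 ≤ t) (ht₂ : t ≤ 1) (hφ : φ ∈ Icc 0 π) :
    t ≤ cos φ ↔ φ ≤ arccos t := by
  conv_lhs => rw [← cos_arccos ht₁ ht₂]
  exact strictAntiOn_cos.le_iff_ge ⟨arccos_nonneg t, arccos_le_pi t⟩ hφ

lemma polarCoord_symm_mem_unitSector_iff {t s φ : ℝ} (ht₁ : -1 ≤ t) (ht₂ : t ≤ 1) (hs : 0 < s)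
    (hφ : φ ∈ Ioo (-π) π) :
    polarCoord.symm (s, φ) ∈ unitSector t ∩ {q | 0 < q.2} ↔ s < 1 ∧ φ ∈ Ioc 0 (arccos t) := by
  have hnorm : √((s * cos φ) ^ 2 + (s * sin φ) ^ 2) = s := by
    rw [mul_pow, mul_pow, ← mul_add, cos_sq_add_sin_sq, mul_one, sqrt_sq hs.le]
  have hsin : 0 < sin φ ↔ 0 < φ :=
    ⟨fun h => not_le.mp fun h' => h.not_ge (sin_nonpos_of_nonpos_of_neg_pi_le h' hφ.1.le),
      fun h => sin_pos_of_pos_of_lt_pi h hφ.2⟩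
  rw [polarCoord_symm_apply]
  change (t * √((s * cos φ) ^ 2 + (s * sin φ) ^ 2) ≤ s * cos φ ∧
    √((s * cos φ) ^ 2 + (s * sin φ) ^ 2) < 1) ∧ 0 < s * sin φ ↔ _
  rw [hnorm, mul_comm t, mul_le_mul_iff_right₀ hs, mul_pos_iff_of_pos_left hs, hsin]
  constructor
  · rintro ⟨⟨hcos, hs1⟩, hφ0⟩
    exact ⟨hs1, hφ0, (le_cos_iff_le_arccos ht₁ ht₂ ⟨hφ0.le, hφ.2.le⟩).mp hcos⟩
  · rintro ⟨hs1, hφ0, hφt⟩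
    exact ⟨⟨(le_cos_iff_le_arccos ht₁ ht₂ ⟨hφ0.le, hφ.2.le⟩).mpr hφt, hs1⟩, hφ0⟩

lemma ofReal_intervalIntegral_eq_setLIntegral {f : ℝ → ℝ} {a b : ℝ} (hf : Continuous f)
    (hab : a ≤ b) (hnn : ∀ x ∈ Ioc a b, 0 ≤ f x) :
    ENNReal.ofReal (∫ x in a..b, f x) = ∫⁻ x in Ioc a b, ENNReal.ofReal (f x) := by
  rw [intervalIntegral.integral_of_le hab,
    ofReal_integral_eq_lintegral_ofReal hf.integrableOn_Ioc
      (ae_restrict_of_forall_mem measurableSet_Ioc hnn)]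

lemma setLIntegral_unitSector (m : ℕ) {t : ℝ} (ht₁ : -1 < t) (ht₂ : t ≤ 1) :
    ∫⁻ q in unitSector t ∩ {q | 0 < q.2}, ENNReal.ofReal (q.2 ^ m) =
      ENNReal.ofReal (1 / (m + 2)) * ENNReal.ofReal (∫ φ in 0..arccos t, sin φ ^ m) := by
  set U : ℝ → ℝ≥0∞ := (Ioo 0 1).indicator fun s => ENNReal.ofReal (s ^ (m + 1))
  set V : ℝ → ℝ≥0∞ := (Ioc 0 (arccos t)).indicator fun φ => ENNReal.ofReal (sin φ ^ m)
  have hS : MeasurableSet (unitSector t ∩ {q | 0 < q.2}) :=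
    (measurableSet_unitSector t).inter (measurableSet_lt measurable_const measurable_snd)
  have hpolar : EqOn (fun p : ℝ × ℝ => ENNReal.ofReal p.1 •
      (unitSector t ∩ {q | 0 < q.2}).indicator (fun q => ENNReal.ofReal (q.2 ^ m))
        (polarCoord.symm p)) (fun p => U p.1 * V p.2) polarCoord.target := by
    rintro ⟨s, φ⟩ ⟨hs, hφ⟩
    have hs : 0 < s := hs
    have hmem := polarCoord_symm_mem_unitSector_iff ht₁.le ht₂ hs hφ
    dsimp only [U, V]
    by_cases h : s < 1 ∧ φ ∈ Ioc 0 (arccos t)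
    · rw [smul_eq_mul, indicator_of_mem (hmem.mpr h),
        indicator_of_mem (show s ∈ Ioo 0 1 from ⟨hs, h.1⟩), indicator_of_mem h.2,
        polarCoord_symm_apply, ← ENNReal.ofReal_mul hs.le,
        ← ENNReal.ofReal_mul (pow_nonneg hs.le _)]
      ring_nf
    · rw [smul_eq_mul, indicator_of_notMem (mt hmem.mp h), mul_zero]
      rcases not_and_or.mp h with h | h
      · rw [indicator_of_notMem (fun hs' : s ∈ Ioo 0 1 => h hs'.2), zero_mul]
      · rw [indicator_of_notMem h, mul_zero]
  have hUm : Measurable U :=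
    ((measurable_id.pow_const _).ennreal_ofReal).indicator measurableSet_Ioo
  have hVm : Measurable V :=
    ((continuous_sin.pow m).measurable.ennreal_ofReal).indicator measurableSet_Ioc
  have hU : ∫⁻ s in Ioi 0, U s = ENNReal.ofReal (1 / (m + 2)) := by
    rw [lintegral_indicator measurableSet_Ioo, Measure.restrict_restrict measurableSet_Ioo,
      inter_eq_left.mpr Ioo_subset_Ioi_self, Measure.restrict_congr_set Ioo_ae_eq_Ioc,
      ← ofReal_intervalIntegral_eq_setLIntegral (continuous_pow _) zero_le_one
        fun s hs => pow_nonneg hs.1.le _, integral_pow]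
    norm_num
    ring_nf
  have hV : ∫⁻ φ in Ioo (-π) π, V φ = ENNReal.ofReal (∫ φ in 0..arccos t, sin φ ^ m) := by
    have hsub : Ioc 0 (arccos t) ⊆ Ioo (-π) π := fun φ hφ =>
      ⟨by linarith [hφ.1, pi_pos], hφ.2.trans_lt (arccos_lt_pi.mpr ht₁)⟩
    have hnn : ∀ φ ∈ Ioc 0 (arccos t), 0 ≤ sin φ ^ m := fun φ hφ =>
      pow_nonneg (sin_nonneg_of_nonneg_of_le_pi hφ.1.le (hφ.2.trans (arccos_le_pi t))) m
    rw [lintegral_indicator measurableSet_Ioc, Measure.restrict_restrict measurableSet_Ioc,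
      inter_eq_left.mpr hsub, ofReal_intervalIntegral_eq_setLIntegral (f := fun φ => sin φ ^ m)
        (continuous_sin.pow m) (arccos_nonneg t) hnn]
  rw [← lintegral_indicator hS, ← lintegral_comp_polarCoord_symm,
    setLIntegral_congr_fun polarCoord.open_target.measurableSet hpolar, polarCoord_target,
    Measure.volume_eq_prod, ← Measure.prod_restrict,
    lintegral_prod_mul hUm.aemeasurable hVm.aemeasurable, hU, hV]

noncomputable def finConsMeasurableEquiv (m : ℕ) :
    (ℝ × EuclideanSpace ℝ (Fin (m + 1))) ≃ᵐ EuclideanSpace ℝ (Fin (m + 2)) :=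
  ((MeasurableEquiv.prodCongr (MeasurableEquiv.refl ℝ)
        (MeasurableEquiv.toLp 2 (Fin (m + 1) → ℝ)).symm).trans
      (MeasurableEquiv.piFinSuccAbove (fun _ : Fin (m + 2) => ℝ) 0).symm).trans
    (MeasurableEquiv.toLp 2 (Fin (m + 2) → ℝ))

lemma measurePreserving_finConsMeasurableEquiv (m : ℕ) :
    MeasurePreserving (finConsMeasurableEquiv m) volume volume := by
  have h₁ : MeasurePreserving (MeasurableEquiv.prodCongr (MeasurableEquiv.refl ℝ)
      (MeasurableEquiv.toLp 2 (Fin (m + 1) → ℝ)).symm) volume volume := by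
    rw [Measure.volume_eq_prod, Measure.volume_eq_prod]
    exact (MeasurePreserving.id volume).prod
      (EuclideanSpace.volume_preserving_symm_measurableEquiv_toLp (Fin (m + 1)))
  have h₂ : MeasurePreserving (MeasurableEquiv.piFinSuccAbove (fun _ : Fin (m + 2) => ℝ) 0).symm
      volume volume := by
    rw [Measure.volume_eq_prod, volume_pi, volume_pi]
    exact (measurePreserving_piFinSuccAbove (fun _ : Fin (m + 2) => (volume : Measure ℝ)) 0).symm
  have h₃ := (EuclideanSpace.volume_preserving_symm_measurableEquiv_toLp (Fin (m + 2))).symm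
  exact h₃.comp (h₂.comp h₁)

lemma finConsMeasurableEquiv_apply_zero (m : ℕ) (a : ℝ) (w : EuclideanSpace ℝ (Fin (m + 1))) :
    finConsMeasurableEquiv m (a, w) 0 = a :=
  Fin.insertNth_apply_same (α := fun _ : Fin (m + 2) => ℝ) 0 a (fun j => w j)

lemma norm_finConsMeasurableEquiv (m : ℕ) (a : ℝ) (w : EuclideanSpace ℝ (Fin (m + 1))) :
    ‖finConsMeasurableEquiv m (a, w)‖ = √(a ^ 2 + ‖w‖ ^ 2) := by
  rw [EuclideanSpace.norm_eq, Fin.sum_univ_succAbove _ 0, EuclideanSpace.norm_sq_eq w]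
  congr 2
  rw [finConsMeasurableEquiv_apply_zero, Real.norm_eq_abs, sq_abs]

lemma volume_cone_inter_ball (m : ℕ) {t : ℝ} (ht₁ : -1 < t) (ht₂ : t ≤ 1) :
    volume ({x : EuclideanSpace ℝ (Fin (m + 2)) | t * ‖x‖ ≤ ⟪x, EuclideanSpace.single 0 1⟫} ∩
        ball 0 1) =
      (m + 1) * volume (ball (0 : EuclideanSpace ℝ (Fin (m + 1))) 1) *
        (ENNReal.ofReal (1 / (m + 2)) * ENNReal.ofReal (∫ φ in 0..arccos t, sin φ ^ m)) := by
  have hpre : finConsMeasurableEquiv m ⁻¹' ({x | t * ‖x‖ ≤ ⟪x, EuclideanSpace.single 0 1⟫} ∩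
      ball 0 1) =
      (fun p : ℝ × EuclideanSpace ℝ (Fin (m + 1)) => (p.1, ‖p.2‖)) ⁻¹' unitSector t := by
    ext ⟨a, w⟩
    simp [unitSector, norm_finConsMeasurableEquiv, finConsMeasurableEquiv_apply_zero,
      EuclideanSpace.inner_single_right]
  rw [← (measurePreserving_finConsMeasurableEquiv m).measure_preimage_equiv, hpre,
    Measure.volume_eq_prod, prod_addHaar_preimage_fst_norm _ (measurableSet_unitSector t),
    finrank_euclideanSpace_fin, Nat.add_sub_cancel, setLIntegral_unitSector m ht₁ ht₂]
  push_cast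
  rfl

lemma volume_unit_ball_ratio (m : ℕ) :
    (m + 1) * (volume (ball (0 : EuclideanSpace ℝ (Fin (m + 1))) 1)).toReal /
        ((m + 2) * (volume (ball (0 : EuclideanSpace ℝ (Fin (m + 2))) 1)).toReal) =
      Gamma ((m + 2) / 2) / (√π * Gamma ((m + 1) / 2)) := by
  simp only [EuclideanSpace.volume_ball, Fintype.card_fin, ENNReal.ofReal_one, one_pow, one_mul]
  rw [ENNReal.toReal_ofReal (by positivity), ENNReal.toReal_ofReal (by positivity)]
  have e₁ : ((m + 1 : ℕ) : ℝ) / 2 + 1 = ((m + 1) / 2 : ℝ) + 1 := by push_cast; ring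
  have e₂ : ((m + 2 : ℕ) : ℝ) / 2 + 1 = ((m + 2) / 2 : ℝ) + 1 := by push_cast; ring
  have hΓ₁ : 0 < Gamma ((m + 1) / 2) := Gamma_pos_of_pos (by positivity)
  have hΓ₂ : 0 < Gamma ((m + 2) / 2) := Gamma_pos_of_pos (by positivity)
  rw [e₁, e₂, Gamma_add_one (by positivity), Gamma_add_one (by positivity), pow_succ √π (m + 1)]
  have : 0 < √π := sqrt_pos.mpr pi_pos
  field_simp

/-- `p₂(r, d) = capFraction n (√d / r)` in the notation of the paper. -/
noncomputable def capFraction (n : ℕ) (t : ℝ) : ℝ :=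
  Gamma ((n : ℝ) / 2) / (√π * Gamma (((n : ℝ) - 1) / 2)) * ∫ φ in 0..arccos t, sin φ ^ (n - 2)

lemma uniformSphereMeasure_halfSpace_eq_capFraction {n : ℕ} (hn : 2 ≤ n)
    (q u : EuclideanSpace ℝ (Fin n)) (hu : ‖u‖ = 1) {r a : ℝ} (hr : 0 < r) (ha₁ : -r < a)
    (ha₂ : a ≤ r) :
    (uniformSphereMeasure q r (halfSpace q u a)).toReal = capFraction n (a / r) := by
  obtain ⟨m, rfl⟩ : ∃ m, n = m + 2 := ⟨n - 2, by omega⟩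
  have ht₁ : -1 < a / r := by rwa [lt_div_iff₀ hr, neg_one_mul]
  have ht₂ : a / r ≤ 1 := (div_le_one hr).mpr ha₂
  have hI : 0 ≤ ∫ φ in 0..arccos (a / r), sin φ ^ m :=
    intervalIntegral.integral_nonneg (arccos_nonneg _) fun φ hφ =>
      pow_nonneg (sin_nonneg_of_nonneg_of_le_pi hφ.1 (hφ.2.trans (arccos_le_pi _))) m
  rw [measure_halfSpace_eq_of_norm_eq a (map_rotateAbout_uniformSphereMeasure q r)
      (u' := EuclideanSpace.single 0 1) (by simp [hu]),
    uniformSphereMeasure_halfSpace q _ a hr, volume_cone_inter_ball m ht₁ ht₂]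
  have hΓ : Gamma (((m + 2 : ℕ) : ℝ) / 2) / (√π * Gamma ((((m + 2 : ℕ) : ℝ) - 1) / 2)) =
      (m + 1) * (volume (ball (0 : EuclideanSpace ℝ (Fin (m + 1))) 1)).toReal /
        ((m + 2) * (volume (ball (0 : EuclideanSpace ℝ (Fin (m + 2))) 1)).toReal) := by
    rw [volume_unit_ball_ratio]
    push_cast
    ring_nf
  have hB : 0 < (volume (ball (0 : EuclideanSpace ℝ (Fin (m + 2))) 1)).toReal :=
    ENNReal.toReal_pos (measure_ball_pos _ _ one_pos).ne' measure_ball_lt_top.ne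
  rw [capFraction, hΓ, Nat.add_sub_cancel,
    show (m : ℝ≥0∞) + 1 = ((m + 1 : ℕ) : ℝ≥0∞) by push_cast; rfl]
  simp only [ENNReal.toReal_mul, ENNReal.toReal_inv, ENNReal.toReal_ofReal hI,
    ENNReal.toReal_natCast, ENNReal.toReal_ofReal (by positivity : (0 : ℝ) ≤ 1 / (m + 2))]
  push_cast
  field_simp

lemma norm_bpsk_sub_bpsk_sq {n : ℕ} (c c' : Fin n → ZMod 2) :
    ‖bpsk c - bpsk c'‖ ^ 2 = 4 * hammingDist c c' := by
  have hcoord : ∀ x y : ZMod 2, ‖(1 - 2 * (x.val : ℝ)) - (1 - 2 * (y.val : ℝ))‖ ^ 2 =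
      if x ≠ y then 4 else 0 := by
    have h01 : ∀ x : ZMod 2, x = 0 ∨ x = 1 := by decide
    intro x y
    rcases h01 x with rfl | rfl <;> rcases h01 y with rfl | rfl <;> norm_num [ZMod.val_one]
  rw [EuclideanSpace.norm_sq_eq, hammingDist, Finset.card_filter, Nat.cast_sum, Finset.mul_sum]
  refine Finset.sum_congr rfl fun i _ => ?_
  rw [PiLp.sub_apply]
  exact (hcoord (c i) (c' i)).trans (by split_ifs <;> simp)

lemma norm_bpsk_sub_bpsk_zero {n : ℕ} (c : Fin n → ZMod 2) :
    ‖bpsk c - bpsk 0‖ = 2 * √(hammingNorm c) := by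
  rw [← sqrt_sq (norm_nonneg _), norm_bpsk_sub_bpsk_sq, hammingDist_zero_right, sqrt_mul' _
    (Nat.cast_nonneg _), show (4 : ℝ) = 2 ^ 2 by norm_num, sqrt_sq zero_le_two]

lemma hammingNorm_le_sq_of_norm_sub_bpsk_le {n : ℕ} {c : Fin n → ZMod 2}
    {y : EuclideanSpace ℝ (Fin n)} (h : ‖y - bpsk c‖ ≤ ‖y - bpsk 0‖) :
    (hammingNorm c : ℝ) ≤ ‖y - bpsk 0‖ ^ 2 := by
  have htri : ‖bpsk c - bpsk 0‖ ≤ 2 * ‖y - bpsk 0‖ := by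
    calc ‖bpsk c - bpsk 0‖ ≤ ‖bpsk c - y‖ + ‖y - bpsk 0‖ := norm_sub_le_norm_sub_add_norm_sub ..
      _ = ‖y - bpsk c‖ + ‖y - bpsk 0‖ := by rw [norm_sub_rev]
      _ ≤ 2 * ‖y - bpsk 0‖ := by linarith
  rw [norm_bpsk_sub_bpsk_zero] at htri
  calc (hammingNorm c : ℝ) = √(hammingNorm c) ^ 2 := (sq_sqrt (Nat.cast_nonneg _)).symm
    _ ≤ ‖y - bpsk 0‖ ^ 2 := pow_le_pow_left₀ (sqrt_nonneg _) (by linarith) 2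

lemma not_norm_sub_bpsk_le_and_norm_sub_bpsk_le {n d : ℕ} {c c' : Fin n → ZMod 2}
    (hc : hammingNorm c = d) (hc' : hammingNorm c' = d) (hne : c ≠ c')
    {y : EuclideanSpace ℝ (Fin n)} (hy : ‖y - bpsk 0‖ ^ 2 ≤ d + 1 / 4) :
    ¬(‖y - bpsk c‖ ≤ ‖y - bpsk 0‖ ∧ ‖y - bpsk c'‖ ≤ ‖y - bpsk 0‖) := by
  rintro ⟨h, h'⟩
  have hsum := sq_norm_add_sq_norm_le_of_norm_sub_le h h'
  have hpar := parallelogram_law_with_norm ℝ (bpsk c - bpsk 0) (bpsk c' - bpsk 0)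
  have hdist : (1 : ℝ) ≤ hammingDist c c' := by exact_mod_cast hammingDist_pos.mpr hne
  rw [sub_sub_sub_cancel_right, norm_bpsk_sub_bpsk_sq] at hpar
  rw [← hammingDist_zero_right] at hc hc'
  rw [norm_bpsk_sub_bpsk_sq, norm_bpsk_sub_bpsk_sq, hc, hc'] at hsum hpar
  set R := ‖y - bpsk 0‖
  set N := ‖(bpsk c - bpsk 0) + (bpsk c' - bpsk 0)‖
  have hR : 0 ≤ R := norm_nonneg _
  have hN : 0 ≤ N := norm_nonneg _
  -- `4 d ≤ R N` and `N² = 16 d - 4 dist(c, c') ≤ 16 d - 4`, so `16 d² ≤ R² N² ≤ 16 d² - 1`.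
  nlinarith [mul_le_mul_of_nonneg_left hy (sq_nonneg N), sq_nonneg (R * N)]

lemma measure_halfSpace_eq_capFraction {n : ℕ} (hn : 2 ≤ n) {ν : Measure (EuclideanSpace ℝ (Fin n))}
    [IsProbabilityMeasure ν] {q : EuclideanSpace ℝ (Fin n)} {r : ℝ} (hr : 0 < r)
    (hsphere : ∀ᵐ y ∂ν, y ∈ sphere q r) (hrot : ∀ O, ν.map (rotateAbout q O) = ν)
    {u : EuclideanSpace ℝ (Fin n)} (hu : ‖u‖ = 1) {a : ℝ} (ha₁ : -r < a) (ha₂ : a ≤ r) :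
    (ν (halfSpace q u a)).toReal = capFraction n (a / r) := by
  have : NeZero n := ⟨by omega⟩
  rw [measure_halfSpace_eq_of_map_rotateAbout_eq hr hsphere
    (ae_mem_sphere_uniformSphereMeasure q hr.le) hrot (map_rotateAbout_uniformSphereMeasure q r)]
  exact uniformSphereMeasure_halfSpace_eq_capFraction hn q u hu hr ha₁ ha₂

lemma measure_norm_sub_bpsk_le_eq_capFraction {n : ℕ} (hn : 2 ≤ n)
    {ν : Measure (EuclideanSpace ℝ (Fin n))} [IsProbabilityMeasure ν] {r : ℝ}
    (hsphere : ∀ᵐ y ∂ν, y ∈ sphere (bpsk 0) r) (hrot : ∀ O, ν.map (rotateAbout (bpsk 0) O) = ν)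
    {c : Fin n → ZMod 2} (hc : c ≠ 0) (hr : √(hammingNorm c) < r) :
    (ν {y | ‖y - bpsk c‖ ≤ ‖y - bpsk 0‖}).toReal = capFraction n (√(hammingNorm c) / r) := by
  have hv := norm_bpsk_sub_bpsk_zero c
  have hne : bpsk c ≠ bpsk 0 := fun h => by
    rw [h, sub_self, norm_zero, eq_comm, mul_eq_zero, sqrt_eq_zero (Nat.cast_nonneg _)] at hv
    exact hc (hammingNorm_eq_zero.mp (by exact_mod_cast hv.resolve_left two_ne_zero))
  have hheight : ‖bpsk c - bpsk 0‖ / 2 = √(hammingNorm c) := by rw [hv]; ring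
  rw [setOf_norm_sub_le_norm_sub_eq_halfSpace hne, hheight]
  exact measure_halfSpace_eq_capFraction hn ((sqrt_nonneg _).trans_lt hr) hsphere hrot
    (norm_smul_inv_norm (sub_ne_zero.mpr hne)) (by linarith [sqrt_nonneg (hammingNorm c : ℝ)]) hr.le

lemma measure_errorRegion_eq_sum {n d : ℕ} {C : Submodule (ZMod 2) (Fin n → ZMod 2)}
    (hd : 0 < d) (hd_le : ∀ c ∈ C, c ≠ 0 → d ≤ hammingNorm c)
    {M : Finset (Fin n → ZMod 2)} (hM : ∀ c, c ∈ M ↔ c ∈ C ∧ hammingNorm c = d)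
    {ν : Measure (EuclideanSpace ℝ (Fin n))} {r : ℝ} (hsphere : ∀ᵐ y ∂ν, y ∈ sphere (bpsk 0) r)
    (hr : r ^ 2 ≤ d + 1 / 4) :
    ν {y | ∃ c ∈ C, c ≠ 0 ∧ ‖y - bpsk c‖ ≤ ‖y - bpsk 0‖} =
      ∑ c ∈ M, ν {y | ‖y - bpsk c‖ ≤ ‖y - bpsk 0‖} := by
  set S := sphere (bpsk (0 : Fin n → ZMod 2)) r
  have hS : MeasurableSet S := isClosed_sphere.measurableSet
  have hν : ν.restrict S = ν := Measure.restrict_eq_self_of_ae_mem hsphere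
  have hnorm : ∀ y ∈ S, ‖y - bpsk 0‖ ^ 2 ≤ d + 1 / 4 := fun y hy => by
    rwa [← dist_eq_norm, mem_sphere.mp hy]
  have hunion : {y | ∃ c ∈ C, c ≠ 0 ∧ ‖y - bpsk c‖ ≤ ‖y - bpsk 0‖} ∩ S =
      ⋃ c ∈ M, {y | ‖y - bpsk c‖ ≤ ‖y - bpsk 0‖} ∩ S := by
    ext y
    simp only [mem_inter_iff, mem_iUnion, exists_prop, hM]
    constructor
    · rintro ⟨⟨c, hcC, hc0, hcy⟩, hy⟩
      have hw : hammingNorm c < d + 1 := by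
        exact_mod_cast (show (hammingNorm c : ℝ) < d + 1 by
          linarith [hammingNorm_le_sq_of_norm_sub_bpsk_le hcy, hnorm y hy])
      exact ⟨c, ⟨hcC, (Nat.le_of_lt_succ hw).antisymm (hd_le c hcC hc0)⟩, hcy, hy⟩
    · rintro ⟨c, ⟨hcC, hcd⟩, hcy, hy⟩
      refine ⟨⟨c, hcC, fun hc0 => ?_, hcy⟩, hy⟩
      rw [hc0, hammingNorm_zero] at hcd
      omega
  have hdisj : (M : Set (Fin n → ZMod 2)).PairwiseDisjoint
      fun c => {y | ‖y - bpsk c‖ ≤ ‖y - bpsk 0‖} ∩ S := by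
    intro c hc c' hc' hne
    refine Set.disjoint_left.mpr fun y ⟨hy, hyS⟩ ⟨hy', _⟩ =>
      not_norm_sub_bpsk_le_and_norm_sub_bpsk_le ((hM c).mp hc).2 ((hM c').mp hc').2 hne
        (hnorm y hyS) ⟨hy, hy'⟩
  have hmeas : ∀ c, MeasurableSet {y : EuclideanSpace ℝ (Fin n) | ‖y - bpsk c‖ ≤ ‖y - bpsk 0‖} :=
    fun c => measurableSet_le (by fun_prop) (by fun_prop)
  rw [← hν, Measure.restrict_apply' hS, hunion,
    measure_biUnion_finset hdisj fun c _ => (hmeas c).inter hS]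
  exact Finset.sum_congr rfl fun c _ => (Measure.restrict_apply' hS).symm

theorem stmt_17_general (n : ℕ) (hn : 2 ≤ n)
    (C : Submodule (ZMod 2) (Fin n → ZMod 2))
    (dmin : ℕ)
    (hdmin_le : ∀ c ∈ C, c ≠ 0 → dmin ≤ hammingNorm c)
    (hdmin_ex : ∃ c ∈ C, c ≠ 0 ∧ hammingNorm c = dmin)
    (A : ℕ) (hA : A = Set.ncard {c : Fin n → ZMod 2 | c ∈ C ∧ hammingNorm c = dmin})
    (μ : ℝ → Measure (EuclideanSpace ℝ (Fin n)))
    (hprob : ∀ r : ℝ, 0 < r → IsProbabilityMeasure (μ r))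
    (hsupp : ∀ r : ℝ, 0 < r → μ r (Metric.sphere (bpsk (0 : Fin n → ZMod 2)) r) = 1)
    (hinv : ∀ r : ℝ, 0 < r →
      ∀ O : EuclideanSpace ℝ (Fin n) ≃ₗᵢ[ℝ] EuclideanSpace ℝ (Fin n),
        (μ r).map (fun y => bpsk (0 : Fin n → ZMod 2) + O (y - bpsk (0 : Fin n → ZMod 2)))
          = μ r) :
    ∃ δ₁ : ℝ, Real.sqrt dmin < δ₁ ∧
      ∀ r : ℝ, Real.sqrt dmin < r → r ≤ δ₁ →
        (μ r {y | ∃ c ∈ C, c ≠ 0 ∧ ‖y - bpsk c‖ ≤ ‖y - bpsk (0 : Fin n → ZMod 2)‖}).toReal =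
          (A : ℝ) *
            ((Real.Gamma ((n : ℝ) / 2) / (Real.sqrt π * Real.Gamma (((n : ℝ) - 1) / 2))) *
              ∫ φ in (0:ℝ)..(Real.arccos (Real.sqrt dmin / r)), (Real.sin φ) ^ (n - 2)) := by
  obtain ⟨c₀, -, hc₀, hc₀d⟩ := hdmin_ex
  have hd : 0 < dmin := hc₀d ▸ hammingNorm_pos_iff.mpr hc₀
  set M := (Set.toFinite {c : Fin n → ZMod 2 | c ∈ C ∧ hammingNorm c = dmin}).toFinset
  have hM : ∀ c, c ∈ M ↔ c ∈ C ∧ hammingNorm c = dmin := fun c => Set.Finite.mem_toFinset _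
  refine ⟨√(dmin + 1 / 4), sqrt_lt_sqrt (Nat.cast_nonneg _) (by linarith), fun r hdr hrδ => ?_⟩
  have hr : 0 < r := (sqrt_nonneg _).trans_lt hdr
  have hr2 : r ^ 2 ≤ dmin + 1 / 4 := (le_sqrt hr.le (by positivity)).mp hrδ
  have := hprob r hr
  have hsphere : ∀ᵐ y ∂μ r, y ∈ sphere (bpsk 0) r :=
    (ae_iff_measure_eq isClosed_sphere.measurableSet.nullMeasurableSet).mpr
      (by rw [measure_univ]; exact hsupp r hr)
  have hcap : ∀ c ∈ M,
      (μ r {y | ‖y - bpsk c‖ ≤ ‖y - bpsk 0‖}).toReal = capFraction n (√dmin / r) := by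
    intro c hc
    obtain ⟨-, hcd⟩ := (hM c).mp hc
    have hc0 : c ≠ 0 := fun h => by rw [h, hammingNorm_zero] at hcd; omega
    rw [← hcd] at hdr ⊢
    exact measure_norm_sub_bpsk_le_eq_capFraction hn hsphere (hinv r hr) hc0 hdr
  rw [measure_errorRegion_eq_sum hd hdmin_le hM hsphere hr2,
    ENNReal.toReal_sum fun c _ => measure_ne_top _ _, Finset.sum_congr rfl hcap, Finset.sum_const,
    nsmul_eq_mul, hA, Set.ncard_eq_toFinset_card _ (Set.toFinite _)]
  rfl

theorem stmt_17 (n : ℕ) (hn : 2 ≤ n)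
    (C : Submodule (ZMod 2) (Fin n → ZMod 2)) (hC : ∃ c ∈ C, c ≠ 0)
    (dmin : ℕ)
    (hdmin_le : ∀ c ∈ C, c ≠ 0 → dmin ≤ hammingNorm c)
    (hdmin_ex : ∃ c ∈ C, c ≠ 0 ∧ hammingNorm c = dmin)
    (A : ℕ) (hA : A = Set.ncard {c : Fin n → ZMod 2 | c ∈ C ∧ hammingNorm c = dmin})
    (μ : ℝ → Measure (EuclideanSpace ℝ (Fin n)))
    (hprob : ∀ r : ℝ, 0 < r → IsProbabilityMeasure (μ r))
    (hsupp : ∀ r : ℝ, 0 < r → μ r (Metric.sphere (bpsk (0 : Fin n → ZMod 2)) r) = 1)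
    (hinv : ∀ r : ℝ, 0 < r →
      ∀ O : EuclideanSpace ℝ (Fin n) ≃ₗᵢ[ℝ] EuclideanSpace ℝ (Fin n),
        (μ r).map (fun y => bpsk (0 : Fin n → ZMod 2) + O (y - bpsk (0 : Fin n → ZMod 2)))
          = μ r) :
    ∃ δ₁ : ℝ, Real.sqrt dmin < δ₁ ∧
      ∀ r : ℝ, Real.sqrt dmin < r → r ≤ δ₁ →
        (μ r {y | ∃ c ∈ C, c ≠ 0 ∧ ‖y - bpsk c‖ ≤ ‖y - bpsk (0 : Fin n → ZMod 2)‖}).toReal =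
          (A : ℝ) *
            ((Real.Gamma ((n : ℝ) / 2) / (Real.sqrt π * Real.Gamma (((n : ℝ) - 1) / 2))) *
              ∫ φ in (0:ℝ)..(Real.arccos (Real.sqrt dmin / r)), (Real.sin φ) ^ (n - 2)) :=
  stmt_17_general n hn C dmin hdmin_le hdmin_ex A hA μ hprob hsupp hinv
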